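/- For all integers n, m ≥ 1, the domination polynomial of the n×m rook graph satisfies D_{R_{n,m}}(x) = ((1+x)^n − 1)^m − (−1)^m Σ_{k=0}^{m−1} (−1)^k C(m,k) ((1+x)^k − 1)^n as an identity in the polynomial ring ℤ[x]. -/

import Mathlib

open Finset Polynomial

/-- The `n × m` rook graph: vertices are squares `(a,b)`; two distinct squares are
adjacent iff they share a row or a column. -/
def rookGraph (n m : ℕ) : SimpleGraph (Fin n × Fin m) where
  Adj v w := v ≠ w ∧ (v.1 = w.1 ∨ v.2 = w.2)
  symm := by
    constructor
    rintro v w ⟨h1, h2⟩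
    exact ⟨h1.symm, h2.imp Eq.symm Eq.symm⟩
  loopless := by
    constructor
    rintro v ⟨h1, _⟩
    exact h1 rfl

/-- `S` is a dominating set of the `n × m` rook graph. -/
def IsDomSet (n m : ℕ) (S : Finset (Fin n × Fin m)) : Prop :=
  ∀ v, v ∈ S ∨ ∃ u ∈ S, (rookGraph n m).Adj u v

/-- `domCount n m k` is the number of dominating sets of cardinality `k`
of the `n × m` rook graph. -/
noncomputable def domCount (n m k : ℕ) : ℕ :=
  Set.ncard {S : Finset (Fin n × Fin m) | S.card = k ∧ IsDomSet n m S}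

/-- `ECount n m k` is the number of `k`-element subsets of `{1,…,n} × {1,…,m}`
that meet every row and every column. -/
noncomputable def ECount (n m k : ℕ) : ℕ :=
  Set.ncard {T : Finset (Fin n × Fin m) | T.card = k ∧
    (∀ r : Fin n, ∃ c : Fin m, (r, c) ∈ T) ∧ (∀ c : Fin m, ∃ r : Fin n, (r, c) ∈ T)}

/-- The domination polynomial of the `n × m` rook graph, as a polynomial over `ℤ`. -/
noncomputable def domPoly (n m : ℕ) : Polynomial ℤ :=
  ∑ k ∈ Finset.range (n * m + 1), Polynomial.C (domCount n m k : ℤ) * Polynomial.X ^ k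

/-!
A set of squares dominates the rook graph iff it meets every row or meets every column. Sets
meeting every row are independent choices of a nonempty subset in each row, so their generating
function is `((1 + x) ^ m - 1) ^ n`; symmetrically for columns. Sets meeting every row and every
column are counted by inclusion–exclusion over the set of occupied columns; in the resulting
alternating sum the term of the full column set is exactly the row count, which cancels.
-/

section Powerset

variable {ι R : Type*} [CommRing R]

theorem sum_powerset_pow_card (s : Finset ι) (x : R) :
    ∑ t ∈ s.powerset, x ^ #t = (1 + x) ^ #s := by
  simpa [add_comm] using sum_pow_mul_eq_add_pow x 1 s

theorem sum_powerset_erase_empty_pow_card [DecidableEq ι] (s : Finset ι) (x : R) :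
    ∑ t ∈ s.powerset.erase ∅, x ^ #t = (1 + x) ^ #s - 1 := by
  rw [sum_erase_eq_sub (empty_mem_powerset s), sum_powerset_pow_card, card_empty, pow_zero]

theorem sum_superset_neg_one_pow [Fintype ι] [DecidableEq ι] (C : Finset ι) :
    ∑ B with C ⊆ B, (-1 : R) ^ (Fintype.card ι - #B) = if C = univ then 1 else 0 := by
  have h := congrArg (Int.cast : ℤ → R) (sum_powerset_neg_one_pow_card (x := Cᶜ))
  simp only [compl_eq_empty_iff, Int.cast_sum, Int.cast_pow, Int.cast_neg, Int.cast_one,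
    apply_ite (Int.cast : ℤ → R), Int.cast_zero] at h
  rw [← h]
  refine sum_nbij' compl compl ?_ ?_ ?_ ?_ ?_ <;> simp [subset_compl_comm, card_compl]

end Powerset

theorem sum_filter_or {ι M : Type*} [AddCommGroup M] [DecidableEq ι] (s : Finset ι)
    (p q : ι → Prop) [DecidablePred p] [DecidablePred q] (f : ι → M) :
    ∑ i ∈ s with p i ∨ q i, f i
      = ∑ i ∈ s with p i, f i + ∑ i ∈ s with q i, f i - ∑ i ∈ s with p i ∧ q i, f i := by
  rw [filter_or, filter_and, eq_sub_iff_add_eq, sum_union_inter]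

theorem neg_one_pow_sub {M : Type*} [Monoid M] [HasDistribNeg M] {j m : ℕ} (h : j ≤ m) :
    (-1 : M) ^ (m - j) = (-1) ^ m * (-1) ^ j := by
  obtain ⟨k, rfl⟩ := exists_add_of_le h
  rw [Nat.add_sub_cancel_left, pow_add, mul_assoc, ← pow_add, add_comm, pow_add, ← mul_assoc,
    ← pow_add, (Even.add_self j).neg_one_pow, one_mul]

section Grid

variable {α β R : Type*} [Fintype α] [Fintype β] [DecidableEq α] [DecidableEq β]

def finsetProdEquivPi : Finset (α × β) ≃ (α → Finset β) where
  toFun S a := {b | (a, b) ∈ S}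
  invFun g := {p | p.2 ∈ g p.1}
  left_inv S := by ext; simp
  right_inv g := by ext; simp

theorem finsetProdEquivPi_apply (S : Finset (α × β)) (a : α) :
    finsetProdEquivPi S a = ({b | (a, b) ∈ S} : Finset β) := rfl

theorem card_eq_sum_card_finsetProdEquivPi (S : Finset (α × β)) :
    #S = ∑ a, #(finsetProdEquivPi S a) := by
  simp only [finsetProdEquivPi_apply, card_filter]
  rw [← Fintype.sum_prod_type' (fun a b => if (a, b) ∈ S then 1 else 0), sum_boole]
  simp

def MeetsEveryRow (S : Finset (α × β)) : Prop := ∀ a, ∃ b, (a, b) ∈ S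

def MeetsEveryCol (S : Finset (α × β)) : Prop := ∀ b, ∃ a, (a, b) ∈ S

instance : DecidablePred (MeetsEveryRow (α := α) (β := β)) :=
  fun S => inferInstanceAs (Decidable (∀ a, ∃ b, (a, b) ∈ S))

instance : DecidablePred (MeetsEveryCol (α := α) (β := β)) :=
  fun S => inferInstanceAs (Decidable (∀ b, ∃ a, (a, b) ∈ S))

variable [CommRing R]

theorem sum_meetsEveryRow_of_image_snd_subset (B : Finset β) (x : R) :
    ∑ S : Finset (α × β) with MeetsEveryRow S ∧ S.image Prod.snd ⊆ B, x ^ #S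
      = ((1 + x) ^ #B - 1) ^ Fintype.card α := by
  calc ∑ S : Finset (α × β) with MeetsEveryRow S ∧ S.image Prod.snd ⊆ B, x ^ #S
      = ∑ g ∈ Fintype.piFinset fun _ : α => B.powerset.erase ∅, ∏ a, x ^ #(g a) := by
        refine sum_equiv finsetProdEquivPi (fun S => ?_) (fun S _ => ?_)
        · simp only [MeetsEveryRow, subset_iff, mem_image, Prod.exists, exists_eq_right,
            forall_exists_index, mem_filter, mem_univ, true_and, Fintype.mem_piFinset,
            finsetProdEquivPi_apply, mem_erase, ne_eq, filter_eq_empty_iff, not_forall,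
            forall_const, Decidable.not_not, mem_powerset, forall_and, and_congr_right_iff]
          exact fun _ => forall_comm
        · rw [prod_pow_eq_pow_sum, ← card_eq_sum_card_finsetProdEquivPi]
    _ = ((1 + x) ^ #B - 1) ^ Fintype.card α := by
        rw [← prod_univ_sum (fun _ => B.powerset.erase ∅) (fun _ t => x ^ #t),
          sum_powerset_erase_empty_pow_card, prod_const, card_univ]

theorem sum_meetsEveryRow (x : R) :
    ∑ S : Finset (α × β) with MeetsEveryRow S, x ^ #S
      = ((1 + x) ^ Fintype.card β - 1) ^ Fintype.card α := by
  simpa using sum_meetsEveryRow_of_image_snd_subset (α := α) (univ : Finset β) x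

theorem sum_meetsEveryCol (x : R) :
    ∑ S : Finset (α × β) with MeetsEveryCol S, x ^ #S
      = ((1 + x) ^ Fintype.card α - 1) ^ Fintype.card β := by
  rw [← sum_meetsEveryRow]
  refine sum_equiv (Equiv.prodComm α β).finsetCongr (fun S => ?_) (fun S _ => by simp)
  simp only [mem_filter_univ]
  simp [MeetsEveryCol, MeetsEveryRow]

theorem sum_meetsEveryRow_and_meetsEveryCol (x : R) :
    ∑ S : Finset (α × β) with MeetsEveryRow S ∧ MeetsEveryCol S, x ^ #S
      = ∑ j ∈ range (Fintype.card β + 1),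
          (-1) ^ (Fintype.card β - j) * ((Fintype.card β).choose j : R)
            * ((1 + x) ^ j - 1) ^ Fintype.card α := by
  have hcol (S : Finset (α × β)) : MeetsEveryCol S ↔ S.image Prod.snd = univ := by
    simp [MeetsEveryCol, eq_univ_iff_forall]
  calc ∑ S : Finset (α × β) with MeetsEveryRow S ∧ MeetsEveryCol S, x ^ #S
      = ∑ S : Finset (α × β) with MeetsEveryRow S,
          ∑ B with S.image Prod.snd ⊆ B, (-1) ^ (Fintype.card β - #B) * x ^ #S := by
        simp only [← sum_mul, sum_superset_neg_one_pow, ite_mul, one_mul, zero_mul, ← hcol,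
          ← sum_filter, filter_filter]
    _ = ∑ B : Finset β, ∑ S : Finset (α × β) with MeetsEveryRow S ∧ S.image Prod.snd ⊆ B,
          (-1) ^ (Fintype.card β - #B) * x ^ #S :=
        sum_comm' fun S B => by simp only [mem_filter_univ, mem_univ, and_true]
    _ = ∑ B : Finset β, (-1) ^ (Fintype.card β - #B) * ((1 + x) ^ #B - 1) ^ Fintype.card α := by
        simp only [← mul_sum, sum_meetsEveryRow_of_image_snd_subset]
    _ = _ := by
        rw [← powerset_univ, sum_powerset_apply_card
            (fun j => (-1 : R) ^ (Fintype.card β - j) * ((1 + x) ^ j - 1) ^ Fintype.card α),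
          card_univ]
        simp only [nsmul_eq_mul, mul_assoc, mul_left_comm (_ : R)]

end Grid

theorem isDomSet_iff {n m : ℕ} (S : Finset (Fin n × Fin m)) :
    IsDomSet n m S ↔ MeetsEveryRow S ∨ MeetsEveryCol S := by
  unfold MeetsEveryRow MeetsEveryCol
  constructor
  · intro hS
    by_contra! h
    obtain ⟨⟨a, ha⟩, ⟨b, hb⟩⟩ := h
    rcases hS (a, b) with hab | ⟨⟨a', b'⟩, hu, -, hrow | hcol⟩
    · exact ha b hab
    · obtain rfl : a' = a := hrow
      exact ha b' hu
    · obtain rfl : b' = b := hcol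
      exact hb a' hu
  · rintro (h | h) ⟨a, b⟩
    · obtain ⟨b', hb'⟩ := h a
      by_cases hbb : b' = b
      · exact .inl (hbb ▸ hb')
      · exact .inr ⟨(a, b'), hb', by simp [rookGraph, hbb]⟩
    · obtain ⟨a', ha'⟩ := h b
      by_cases haa : a' = a
      · exact .inl (haa ▸ ha')
      · exact .inr ⟨(a', b), ha', by simp [rookGraph, haa]⟩

theorem domPoly_eq_sum (n m : ℕ) :
    domPoly n m = ∑ S : Finset (Fin n × Fin m) with MeetsEveryRow S ∨ MeetsEveryCol S, X ^ #S := by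
  have hcard : ∀ S ∈ ({S | MeetsEveryRow S ∨ MeetsEveryCol S} : Finset (Finset (Fin n × Fin m))),
      #S ∈ range (n * m + 1) := fun S _ => by
    simpa [Nat.lt_succ_iff] using card_le_univ S
  rw [← sum_fiberwise_of_maps_to hcard, domPoly]
  refine sum_congr rfl fun k _ => ?_
  rw [sum_congr rfl fun S hS => by rw [(mem_filter.1 hS).2], sum_const, nsmul_eq_mul, map_natCast,
    domCount, ← Set.ncard_coe_finset]
  congr 3
  ext S
  simp [isDomSet_iff, and_comm]

theorem rook_domination_polynomial_general (n m : ℕ) :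
    domPoly n m =
      ((1 + Polynomial.X) ^ n - 1) ^ m -
        (-1 : Polynomial ℤ) ^ m *
          ∑ k ∈ Finset.range m,
            (-1 : Polynomial ℤ) ^ k * Polynomial.C (m.choose k : ℤ) *
              ((1 + Polynomial.X) ^ k - 1) ^ n := by
  rw [domPoly_eq_sum, sum_filter_or, sum_meetsEveryRow, sum_meetsEveryCol,
    sum_meetsEveryRow_and_meetsEveryCol]
  simp only [Fintype.card_fin, sum_range_succ, Nat.sub_self, pow_zero, Nat.choose_self,
    Nat.cast_one, one_mul, map_natCast, mul_sum]
  have hsign : ∀ k ∈ range m, (-1 : ℤ[X]) ^ (m - k) * (m.choose k : ℤ[X]) * ((1 + X) ^ k - 1) ^ n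
      = (-1) ^ m * ((-1) ^ k * (m.choose k : ℤ[X]) * ((1 + X) ^ k - 1) ^ n) := fun k hk => by
    rw [neg_one_pow_sub (mem_range.1 hk).le]
    ring
  rw [sum_congr rfl hsign]
  ring

/-- Theorem 4: the domination polynomial of the `n × m` rook graph. -/
theorem rook_domination_polynomial (n m : ℕ) (hn : 1 ≤ n) (hm : 1 ≤ m) :
    domPoly n m =
      ((1 + Polynomial.X) ^ n - 1) ^ m -
        (-1 : Polynomial ℤ) ^ m *
          ∑ k ∈ Finset.range m,
            (-1 : Polynomial ℤ) ^ k * Polynomial.C (m.choose k : ℤ) *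
              ((1 + Polynomial.X) ^ k - 1) ^ n :=
  rook_domination_polynomial_general n m
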